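/- arXiv:2604.19174 — 4 statements merged into one kernel-verified Lean document; each statement's English description precedes it below -/
import Mathlib

section
/- Every minimal non-sofic group is finitely generated; in particular, every proper subgroup of a minimal non-sofic group is contained in a maximal (proper) subgroup. -/
/-- The normalized Hamming distance between two permutations of `Fin n`:
the number of points where they differ, divided by `n`. -/
noncomputable def permHammingDist {n : ℕ} (σ τ : Equiv.Perm (Fin n)) : ℝ :=
  ((Finset.univ.filter fun i => σ i ≠ τ i).card : ℝ) / n

/-- A group `G` is sofic if for every finite subset `F ⊆ G` and every `ε > 0` there exist
`n ≥ 1` and a map `θ` from `F` to `Sym(Fin n)` (extended to all of `G`) such that: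
(i) `θ` is an `ε`-approximate homomorphism on `F`;
(ii) `θ` almost sends the identity to the identity;
(iii) distinct elements of `F` are sent to permutations at Hamming distance at least `1/4`. -/
def IsSofic (G : Type*) [Group G] : Prop :=
  ∀ (F : Finset G) (ε : ℝ), 0 < ε →
    ∃ n : ℕ, 1 ≤ n ∧ ∃ θ : G → Equiv.Perm (Fin n),
      (∀ g h : G, g ∈ F → h ∈ F → g * h ∈ F →
        permHammingDist (θ g * θ h) (θ (g * h)) < ε) ∧
      ((1 : G) ∈ F → permHammingDist (θ 1) 1 < ε) ∧
      (∀ x y : G, x ∈ F → y ∈ F → x ≠ y → 1 / 4 ≤ permHammingDist (θ x) (θ y))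

/-- A group is minimal non-sofic if it is not sofic but every proper subgroup is sofic. -/
def IsMinimalNonSofic (G : Type*) [Group G] : Prop :=
  ¬ IsSofic G ∧ ∀ H : Subgroup G, H ≠ ⊤ → IsSofic H

/-!
Soficity is a local property: a group all of whose finite subsets lie in sofic subgroups is
sofic. If a minimal non-sofic group `G` were not finitely generated, every finite subset would
generate a proper, hence sofic, subgroup, and `G` would be sofic. Once `G` is finitely generated, `⊤` is
a compact element of the subgroup lattice, so Zorn's lemma puts every proper subgroup below a
maximal one.
-/

open Subgroup

theorem isSofic_of_forall_finset_subset_isSofic (G : Type*) [Group G]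
    (h : ∀ F : Finset G, ∃ H : Subgroup G, (F : Set G) ⊆ H ∧ IsSofic H) : IsSofic G := by
  classical
  intro F ε hε
  obtain ⟨H, hFH, hH⟩ := h F
  obtain ⟨n, hn, θ, hmul, hone, hsep⟩ := hH (F.subtype (· ∈ H)) ε hε
  let θG : G → Equiv.Perm (Fin n) := fun g => if hg : g ∈ H then θ ⟨g, hg⟩ else 1
  have hθG : ∀ g (hg : g ∈ F), θG g = θ ⟨g, hFH hg⟩ := fun g hg => dif_pos (hFH hg)
  have hmem : ∀ g (hg : g ∈ F), (⟨g, hFH hg⟩ : H) ∈ F.subtype (· ∈ H) := fun g hg =>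
    Finset.mem_subtype.mpr hg
  refine ⟨n, hn, θG, fun g k hg hk hgk => ?_, fun h1 => ?_, fun x y hx hy hxy => ?_⟩
  · rw [hθG g hg, hθG k hk, hθG _ hgk]
    exact hmul _ _ (hmem g hg) (hmem k hk) (hmem _ hgk)
  · rw [hθG 1 h1]
    exact hone (hmem 1 h1)
  · rw [hθG x hx, hθG y hy]
    exact hsep _ _ (hmem x hx) (hmem y hy) (fun hxy' => hxy (congrArg Subtype.val hxy'))

theorem Subgroup.FG.isCompactElement {G : Type*} [Group G] {H : Subgroup G} (hH : H.FG) :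
    IsCompactElement H := by
  obtain ⟨S, rfl⟩ := hH
  rw [CompleteLattice.isCompactElement_iff_le_of_directed_sSup_le]
  intro s hne hdir hle
  have hS : (S : Set G) ⊆ ⋃ K ∈ s, (K : Set G) := fun x hx => by
    obtain ⟨K, hK, hxK⟩ := (mem_sSup_of_directedOn hne hdir).mp (hle (subset_closure hx))
    exact Set.mem_biUnion hK hxK
  obtain ⟨K, hK, hSK⟩ := hdir.exists_mem_subset_of_finset_subset_biUnion hne hS
  exact ⟨K, hK, (closure_le K).mpr hSK⟩

theorem Group.FG.isCoatomic_subgroup {G : Type*} [Group G] (hG : Group.FG G) :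
    IsCoatomic (Subgroup G) :=
  CompleteLattice.coatomic_of_top_compact (Group.fg_def.mp hG).isCompactElement

theorem IsMinimalNonSofic.fg {G : Type*} [Group G] (hG : IsMinimalNonSofic G) : Group.FG G := by
  by_contra hnfg
  refine hG.1 (isSofic_of_forall_finset_subset_isSofic G fun F => ⟨closure F, subset_closure, ?_⟩)
  exact hG.2 _ fun htop => hnfg ⟨⟨F, htop⟩⟩

/-- Every minimal non-sofic group is finitely generated; in particular every proper
subgroup is contained in a maximal proper subgroup. -/
theorem minimalNonSofic_fg (G : Type*) [Group G] (hG : IsMinimalNonSofic G) :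
    Group.FG G ∧
      ∀ H : Subgroup G, H ≠ ⊤ → ∃ M : Subgroup G, IsCoatom M ∧ H ≤ M := by
  have hfg := hG.fg
  have := hfg.isCoatomic_subgroup
  exact ⟨hfg, fun H hH => (eq_top_or_exists_le_coatom H).resolve_left hH⟩
end

section
/- Every minimal non-sofic group G is perfect, i.e., G equals its commutator subgroup [G,G]. -/
/-!
If `G` is not perfect, we show that `G` is sofic because its proper subgroups are, contradicting
minimality. Soficity is local, so if `G` is not finitely generated, every finite subset lies in a
proper, hence sofic, subgroup. If `G` is finitely generated, some maximal subgroup `M` contains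
`[G, G]`; then `G ⧸ M` is abelian and simple, hence of prime order, so `M` has finite index.
A sofic approximation `φ` of `M` induces one of `G` on `(G ⧸ M) × Fin n`, where `g` acts by
`(q, a) ↦ (g • q, φ (c g q) a)` with `c` the cocycle of a transversal. The Hamming defects of this
action are averages over `q` of those of `φ`, and two elements that move some coset differently
are separated by distance `1` there.
-/

open Finset
open scoped BigOperators

noncomputable def normHammingDist {ι β : Type*} [Fintype ι] [DecidableEq β] (f g : ι → β) : ℝ :=
  hammingDist f g / Fintype.card ι

section normHammingDist

variable {ι κ α β : Type*} [Fintype ι] [DecidableEq β]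

lemma permHammingDist_eq_normHammingDist {n : ℕ} (σ τ : Equiv.Perm (Fin n)) :
    permHammingDist σ τ = normHammingDist ⇑σ ⇑τ := by
  rw [normHammingDist, Fintype.card_fin]
  rfl

lemma hammingDist_comp_equiv [Fintype κ] (e : κ ≃ ι) (f g : ι → β) :
    hammingDist (f ∘ e) (g ∘ e) = hammingDist f g := by
  simp only [hammingDist]
  rw [← Finset.card_map e.toEmbedding]
  congr 1
  ext i
  simp

lemma normHammingDist_permCongr [Fintype α] [DecidableEq α] [Fintype κ] [DecidableEq κ]
    (e : α ≃ κ) (σ τ : Equiv.Perm α) :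
    normHammingDist ⇑(e.permCongr σ) ⇑(e.permCongr τ) = normHammingDist ⇑σ ⇑τ := by
  have hcomp (π : Equiv.Perm α) : ⇑(e.permCongr π) = fun k => e ((π ∘ e.symm) k) := rfl
  rw [normHammingDist, normHammingDist, hcomp, hcomp,
    hammingDist_comp (fun _ => e) (x := σ ∘ e.symm) fun _ => e.injective,
    hammingDist_comp_equiv, Fintype.card_congr e]

lemma hammingDist_prod [Fintype κ] (f g : κ × ι → β) :
    hammingDist f g = ∑ k, hammingDist (fun i => f (k, i)) (fun i => g (k, i)) := by
  simp only [hammingDist, Finset.card_filter]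
  exact Fintype.sum_prod_type _

lemma normHammingDist_prod [Fintype κ] (f g : κ × ι → β) :
    normHammingDist f g = 𝔼 k, normHammingDist (fun i => f (k, i)) (fun i => g (k, i)) := by
  rw [Finset.expect_eq_sum_div_card, normHammingDist, hammingDist_prod, Fintype.card_prod,
    Finset.card_univ]
  simp only [normHammingDist, ← Finset.sum_div]
  push_cast
  rw [div_div, mul_comm]

lemma normHammingDist_prodMk [DecidableEq α] (b : α) (f g : ι → β) :
    normHammingDist (fun i => (b, f i)) (fun i => (b, g i)) = normHammingDist f g := by
  simp only [normHammingDist]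
  congr 2
  exact hammingDist_comp (fun _ => Prod.mk b) fun _ => Prod.mk_right_injective b

lemma normHammingDist_le_normHammingDist_prodMk [DecidableEq α] (b b' : α) (f g : ι → β) :
    normHammingDist f g ≤ normHammingDist (fun i => (b, f i)) (fun i => (b', g i)) := by
  unfold normHammingDist
  gcongr
  exact hammingDist_comp_le_hammingDist (fun _ : ι => (Prod.snd : α × β → β))
    (x := fun i => (b, f i)) (y := fun i => (b', g i))

lemma normHammingDist_prodMk_of_ne [Nonempty ι] [DecidableEq α] {b b' : α} (hb : b ≠ b')
    (f g : ι → β) : normHammingDist (fun i => (b, f i)) (fun i => (b', g i)) = 1 := by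
  have hall : ∀ i, (b, f i) ≠ (b', g i) := fun _ h => hb (Prod.ext_iff.1 h).1
  simp [normHammingDist, hammingDist, hall]

end normHammingDist

lemma permHammingDist_permCongr {α : Type*} [Fintype α] [DecidableEq α] {m : ℕ} (e : α ≃ Fin m)
    (σ τ : Equiv.Perm α) :
    permHammingDist (e.permCongr σ) (e.permCongr τ) = normHammingDist ⇑σ ⇑τ := by
  rw [permHammingDist_eq_normHammingDist, normHammingDist_permCongr]

section InducedPerm

variable {G : Type*} [Group G] (H : Subgroup G)

noncomputable def cosetCocycle (g : G) (q : G ⧸ H) : H :=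
  ⟨(g • q).out⁻¹ * g * q.out, by
    rw [mul_assoc, ← QuotientGroup.eq, QuotientGroup.out_eq']
    nth_rw 1 [← QuotientGroup.out_eq' q]
    rfl⟩

lemma cosetCocycle_mul (g h : G) (q : G ⧸ H) :
    cosetCocycle H (g * h) q = cosetCocycle H g (h • q) * cosetCocycle H h q := by
  ext
  simp only [cosetCocycle, Subgroup.coe_mul, mul_smul]
  group

lemma cosetCocycle_one (q : G ⧸ H) : cosetCocycle H 1 q = 1 := by
  ext
  simp [cosetCocycle]

lemma cosetCocycle_injective {x y : G} {q : G ⧸ H} (hq : x • q = y • q)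
    (h : cosetCocycle H x q = cosetCocycle H y q) : x = y := by
  have := congrArg Subtype.val h
  simp only [cosetCocycle, hq] at this
  exact mul_left_cancel (mul_right_cancel this)

variable {H} {α : Type*}

noncomputable def inducedPerm (φ : H → Equiv.Perm α) (g : G) : Equiv.Perm ((G ⧸ H) × α) :=
  Equiv.prodShear (MulAction.toPerm g) fun q => φ (cosetCocycle H g q)

@[simp]
lemma inducedPerm_apply (φ : H → Equiv.Perm α) (g : G) (q : G ⧸ H) (a : α) :
    inducedPerm φ g (q, a) = (g • q, φ (cosetCocycle H g q) a) :=
  rfl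

variable [Fintype (G ⧸ H)] [DecidableEq (G ⧸ H)] [Fintype α] [DecidableEq α]
  (φ : H → Equiv.Perm α)

lemma normHammingDist_inducedPerm_mul (g h : G) :
    normHammingDist ⇑(inducedPerm φ g * inducedPerm φ h) ⇑(inducedPerm φ (g * h)) =
      𝔼 q, normHammingDist ⇑(φ (cosetCocycle H g (h • q)) * φ (cosetCocycle H h q))
        ⇑(φ (cosetCocycle H g (h • q) * cosetCocycle H h q)) := by
  rw [normHammingDist_prod]
  refine Finset.expect_congr rfl fun q _ => ?_
  simp only [Equiv.Perm.mul_apply, inducedPerm_apply, cosetCocycle_mul, mul_smul]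
  exact normHammingDist_prodMk _ _ _

lemma normHammingDist_inducedPerm_one :
    normHammingDist ⇑(inducedPerm φ 1) ⇑(1 : Equiv.Perm ((G ⧸ H) × α)) =
      normHammingDist ⇑(φ 1) ⇑(1 : Equiv.Perm α) := by
  rw [normHammingDist_prod]
  refine (Finset.expect_congr rfl fun q _ => ?_).trans (Finset.expect_const Finset.univ_nonempty _)
  simp only [inducedPerm_apply, cosetCocycle_one, one_smul]
  exact normHammingDist_prodMk q (φ 1) ⇑(1 : Equiv.Perm α)

lemma le_normHammingDist_inducedPerm [Nonempty α] {δ : ℝ} (hδ : δ ≤ 1) {x y : G} (hxy : x ≠ y)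
    (hφ : ∀ q, cosetCocycle H x q ≠ cosetCocycle H y q →
      δ ≤ normHammingDist ⇑(φ (cosetCocycle H x q)) ⇑(φ (cosetCocycle H y q))) :
    δ ≤ normHammingDist ⇑(inducedPerm φ x) ⇑(inducedPerm φ y) := by
  rw [normHammingDist_prod]
  refine Finset.le_expect Finset.univ_nonempty fun q _ => ?_
  simp only [inducedPerm_apply]
  by_cases hq : x • q = y • q
  · exact (hφ q fun h => hxy (cosetCocycle_injective H hq h)).trans
      (normHammingDist_le_normHammingDist_prodMk _ _ _ _)
  · rwa [normHammingDist_prodMk_of_ne hq]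

end InducedPerm

theorem isSofic_of_finiteIndex {G : Type*} [Group G] (H : Subgroup G) [H.FiniteIndex]
    (hH : IsSofic H) : IsSofic G := by
  classical
  intro F ε hε
  let _ : Fintype (G ⧸ H) := Fintype.ofFinite _
  let F' : Finset H := (F ×ˢ univ).image fun p => cosetCocycle H p.1 p.2
  have hF' : ∀ g ∈ F, ∀ q, cosetCocycle H g q ∈ F' := fun g hg q =>
    mem_image.2 ⟨(g, q), by simpa using hg, rfl⟩
  obtain ⟨n, hn, φ, hmul, hone, hsep⟩ := hH F' ε hε
  have : NeZero n := ⟨by omega⟩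
  let e := Fintype.equivFin ((G ⧸ H) × Fin n)
  refine ⟨_, Fintype.card_pos, fun g => e.permCongr (inducedPerm φ g), ?_, ?_, ?_⟩
  · intro g h hg hh hgh
    rw [← Equiv.permCongr_mul, permHammingDist_permCongr, normHammingDist_inducedPerm_mul]
    have hslice : ∀ q, normHammingDist ⇑(φ (cosetCocycle H g (h • q)) * φ (cosetCocycle H h q))
        ⇑(φ (cosetCocycle H g (h • q) * cosetCocycle H h q)) < ε := fun q => by
      rw [← permHammingDist_eq_normHammingDist]
      exact hmul _ _ (hF' g hg _) (hF' h hh q) (cosetCocycle_mul H g h q ▸ hF' _ hgh q)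
    exact Finset.expect_lt (fun q _ => (hslice q).le) ⟨QuotientGroup.mk 1, mem_univ _, hslice _⟩
  · intro h1
    have he : (1 : Equiv.Perm (Fin _)) = e.permCongr 1 := (map_one e.permCongrHom).symm
    rw [he, permHammingDist_permCongr, normHammingDist_inducedPerm_one,
      ← permHammingDist_eq_normHammingDist]
    exact hone (cosetCocycle_one H (QuotientGroup.mk 1) ▸ hF' 1 h1 _)
  · intro x y hx hy hxy
    rw [permHammingDist_permCongr]
    refine le_normHammingDist_inducedPerm φ (by norm_num) hxy fun q hq => ?_
    rw [← permHammingDist_eq_normHammingDist]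
    exact hsep _ _ (hF' x hx q) (hF' y hy q) hq

theorem isSofic_of_forall_exists_isSofic_subgroup {G : Type*} [Group G]
    (h : ∀ F : Finset G, ∃ H : Subgroup G, (F : Set G) ⊆ H ∧ IsSofic H) : IsSofic G := by
  classical
  intro F ε hε
  obtain ⟨H, hFH, hH⟩ := h F
  obtain ⟨n, hn, φ, hmul, hone, hsep⟩ := hH (F.subtype (· ∈ H)) ε hε
  let θ : G → Equiv.Perm (Fin n) := Function.extend Subtype.val φ 1
  have hθ (x : H) : θ x = φ x := Subtype.val_injective.extend_apply φ 1 x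
  refine ⟨n, hn, θ, fun g h hg hh hgh => ?_, fun h1 => ?_, fun x y hx hy hxy => ?_⟩
  · lift g to H using hFH hg
    lift h to H using hFH hh
    rw [← Subgroup.coe_mul, hθ, hθ, hθ]
    exact hmul g h (mem_subtype.2 hg) (mem_subtype.2 hh) (mem_subtype.2 hgh)
  · rw [← Subgroup.coe_one, hθ]
    exact hone (mem_subtype.2 h1)
  · lift x to H using hFH hx
    lift y to H using hFH hy
    rw [hθ, hθ]
    exact hsep x y (mem_subtype.2 hx) (mem_subtype.2 hy) (by rintro rfl; exact hxy rfl)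

lemma Subgroup.isCompactElement_zpowers {G : Type*} [Group G] (g : G) :
    IsCompactElement (Subgroup.zpowers g) := by
  rw [CompleteLattice.isCompactElement_iff_le_of_directed_sSup_le]
  intro S hne hdir hle
  obtain ⟨K, hK, hgK⟩ :=
    (Subgroup.mem_sSup_of_directedOn hne hdir).1 (hle (Subgroup.mem_zpowers g))
  exact ⟨K, hK, Subgroup.zpowers_le.2 hgK⟩

instance Subgroup.isCoatomic_of_fg {G : Type*} [Group G] [Group.FG G] :
    IsCoatomic (Subgroup G) := by
  obtain ⟨S, hS⟩ := Group.fg_def.1 ‹_›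
  refine CompleteLattice.coatomic_of_top_compact ?_
  have : (⊤ : Subgroup G) = S.sup Subgroup.zpowers := by
    refine le_antisymm ?_ (Finset.sup_le fun g _ => le_top)
    rw [← hS, Subgroup.closure_le]
    exact fun g hg => Finset.le_sup (f := Subgroup.zpowers) hg (Subgroup.mem_zpowers g)
  rw [this]
  exact CompleteLattice.isCompactElement_finsetSup S fun g _ => Subgroup.isCompactElement_zpowers g

lemma QuotientGroup.isSimpleGroup_of_isCoatom {G : Type*} [Group G] {M : Subgroup G} [M.Normal]
    (hM : IsCoatom M) : IsSimpleGroup (G ⧸ M) :=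
  have : IsSimpleOrder (Subgroup (G ⧸ M)) :=
    OrderIso.isSimpleOrder_iff (β := Set.Ici M) (QuotientGroup.comapMk'OrderIso M) |>.2
      (Set.isSimpleOrder_Ici_iff_isCoatom.2 hM)
  { toNontrivial := Subgroup.nontrivial_iff.1 inferInstance
    eq_bot_or_eq_top_of_normal := fun N _ => IsSimpleOrder.eq_bot_or_eq_top N }

lemma exists_finiteIndex_ne_top_of_commutator_ne_top {G : Type*} [Group G] [Group.FG G]
    (h : commutator G ≠ ⊤) : ∃ M : Subgroup G, M ≠ ⊤ ∧ M.FiniteIndex := by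
  obtain ⟨M, hM, hle⟩ := (eq_top_or_exists_le_coatom (commutator G)).resolve_left h
  have : M.Normal := Subgroup.Normal.of_commutator_le G hle
  have : IsMulCommutative (G ⧸ M) := Subgroup.Normal.quotient_commutative_iff_commutator_le.2 hle
  have : Finite (G ⧸ M) := Nat.finite_of_card_ne_zero
    (Group.is_simple_iff_prime_card.1 (QuotientGroup.isSimpleGroup_of_isCoatom hM)).ne_zero
  exact ⟨M, hM.1, Subgroup.finiteIndex_of_finite_quotient⟩

/-- Every minimal non-sofic group is perfect: it equals its commutator subgroup. -/
theorem minimalNonSofic_perfect (G : Type*) [Group G] (hG : IsMinimalNonSofic G) :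
    commutator G = ⊤ := by
  by_contra hne
  apply hG.1
  by_cases hfg : Group.FG G
  · obtain ⟨M, hM, _⟩ := exists_finiteIndex_ne_top_of_commutator_ne_top hne
    exact isSofic_of_finiteIndex M (hG.2 M hM)
  · refine isSofic_of_forall_exists_isSofic_subgroup fun F => ⟨_, Subgroup.subset_closure, ?_⟩
    exact hG.2 _ fun hF => hfg (Group.fg_def.2 ⟨F, hF⟩)
end

section
/- Every minimal non-sofic group has a maximal normal subgroup, i.e., a proper normal subgroup that is maximal (with respect to inclusion) among proper normal subgroups. -/
/-- `M` is a maximal normal subgroup of `G`: a proper normal subgroup that is maximal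
with respect to inclusion among proper normal subgroups. -/
def IsMaximalNormal {G : Type*} [Group G] (M : Subgroup G) : Prop :=
  M.Normal ∧ M ≠ ⊤ ∧ ∀ N : Subgroup G, N.Normal → N ≠ ⊤ → M ≤ N → N = M

/-- dist on Fin 1 is zero -/
lemma permHammingDist_one (σ τ : Equiv.Perm (Fin 1)) : permHammingDist σ τ = 0 := by
  have h : (Finset.univ.filter fun i => σ i ≠ τ i) = ∅ :=
    Finset.filter_eq_empty_iff.2 (fun i _ => by simp [Subsingleton.elim (σ i) (τ i)])
  unfold permHammingDist
  rw [h]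
  simp

lemma sofic_of_subsingleton (G : Type*) [Group G] (h : Subsingleton G) : IsSofic G := by
  intro F ε hε
  refine ⟨1, le_refl 1, fun _ => 1, ?_, ?_, ?_⟩
  · intro g h _ _ _; rw [permHammingDist_one]; exact hε
  · intro _; rw [permHammingDist_one]; exact hε
  · intro x y _ _ hxy; exact absurd (Subsingleton.elim x y) hxy

/-- soficity pulls back from a subgroup covering the finite set -/
lemma sofic_of_all_proper_closure (G : Type*) [Group G]
    (hprop : ∀ H : Subgroup G, H ≠ ⊤ → IsSofic H)
    (hcl : ∀ S : Finset G, Subgroup.closure (S : Set G) ≠ ⊤) : IsSofic G := by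
  intro F ε hε
  set H := Subgroup.closure (F : Set G) with hH
  have hFH : ∀ x ∈ F, x ∈ H := fun x hx => Subgroup.subset_closure hx
  have hHsofic : IsSofic H := hprop H (hcl F)
  set F' : Finset H := F.preimage (Subtype.val) (Set.injOn_of_injective Subtype.val_injective)
    with hF'
  have memF' : ∀ x : H, x ∈ F' ↔ (x : G) ∈ F := fun x => Finset.mem_preimage
  obtain ⟨n, hn, θ', h1, h2, h3⟩ := hHsofic F' ε hε
  classical
  refine ⟨n, hn, fun g => if h : g ∈ H then θ' ⟨g, h⟩ else 1, ?_, ?_, ?_⟩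
  · intro g h hg hh hgh
    have hgH := hFH g hg; have hhH := hFH h hh; have hghH := hFH _ hgh
    simp only [dif_pos hgH, dif_pos hhH, dif_pos hghH]
    have := h1 ⟨g, hgH⟩ ⟨h, hhH⟩ ((memF' _).2 hg) ((memF' _).2 hh)
      (by rw [memF']; exact hgh)
    exact this
  · intro h1F
    have h1H : (1 : G) ∈ H := one_mem H
    simp only [dif_pos h1H]
    have := h2 ((memF' _).2 (by simpa using h1F))
    exact this
  · intro x y hx hy hxy
    have hxH := hFH x hx; have hyH := hFH y hy
    simp only [dif_pos hxH, dif_pos hyH]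
    exact h3 ⟨x, hxH⟩ ⟨y, hyH⟩ ((memF' _).2 hx) ((memF' _).2 hy)
      (by simp [Subtype.ext_iff, hxy])

/-- Every minimal non-sofic group has a maximal normal subgroup. -/
theorem minimalNonSofic_has_maximalNormal (G : Type*) [Group G]
    (hG : IsMinimalNonSofic G) :
    ∃ M : Subgroup G, IsMaximalNormal M := by
  obtain ⟨hns, hprop⟩ := hG
  -- G is finitely generated
  obtain ⟨S, hS⟩ : ∃ S : Finset G, Subgroup.closure (S : Set G) = ⊤ := by
    by_contra h
    push_neg at h
    exact hns (sofic_of_all_proper_closure G hprop h)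
  -- G is nontrivial
  have hbot : (⊥ : Subgroup G) ≠ ⊤ := by
    intro hb
    apply hns
    apply sofic_of_subsingleton
    constructor
    intro a b
    have ha : a ∈ (⊥ : Subgroup G) := hb ▸ Subgroup.mem_top a
    have hbmem : b ∈ (⊥ : Subgroup G) := hb ▸ Subgroup.mem_top b
    rw [Subgroup.mem_bot] at ha hbmem
    rw [ha, hbmem]
  -- Zorn
  set s : Set (Subgroup G) := {N | N.Normal ∧ N ≠ ⊤} with hs
  have hbots : (⊥ : Subgroup G) ∈ s := ⟨inferInstance, hbot⟩
  have hub : ∀ c ⊆ s, IsChain (· ≤ ·) c → ∀ y ∈ c, ∃ ub ∈ s, ∀ z ∈ c, z ≤ ub := by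
    intro c hcs hchain y hy
    have hcne : c.Nonempty := ⟨y, hy⟩
    have hdir : DirectedOn (· ≤ ·) c := hchain.directedOn
    refine ⟨sSup c, ⟨?_, ?_⟩, fun z hz => le_sSup hz⟩
    · -- normal
      constructor
      intro g hg x
      obtain ⟨N, hNc, hgN⟩ := (Subgroup.mem_sSup_of_directedOn hcne hdir).1 hg
      exact le_sSup hNc ((hcs hNc).1.conj_mem g hgN x)
    · -- proper
      intro htop
      have hSsub : (S : Set G) ⊆ ⋃ N ∈ c, (N : Set G) := by
        intro x hx
        have : x ∈ sSup c := htop ▸ Subgroup.mem_top x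
        obtain ⟨N, hNc, hxN⟩ := (Subgroup.mem_sSup_of_directedOn hcne hdir).1 this
        exact Set.mem_biUnion hNc hxN
      have hdir' : DirectedOn (fun N M : Subgroup G => (N : Set G) ⊆ (M : Set G)) c := by
        intro a ha b hb
        obtain ⟨m, hm, hma, hmb⟩ := hdir a ha b hb
        exact ⟨m, hm, hma, hmb⟩
      obtain ⟨N, hNc, hSN⟩ := hdir'.exists_mem_subset_of_finset_subset_biUnion hcne hSsub
      have : Subgroup.closure (S : Set G) ≤ N := (Subgroup.closure_le N).2 hSN
      rw [hS] at this
      exact (hcs hNc).2 (top_le_iff.1 this)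
  obtain ⟨M, -, hMs, hMmax⟩ := zorn_le_nonempty₀ s hub ⊥ hbots
  exact ⟨M, hMs.1, hMs.2, fun N hN hNt hMN => le_antisymm (hMmax ⟨hN, hNt⟩ hMN) hMN⟩
end

section
/- If there exists a non-sofic group, then there exists an ω-non-sofic group, i.e., a non-sofic group admitting a strictly descending chain H_0 > H_1 > H_2 > ⋯ of non-sofic subgroups indexed by the natural numbers. -/
/-- A non-sofic group is ω-non-sofic if it admits a strictly descending chain of
non-sofic subgroups indexed by ℕ. -/
def IsOmegaNonSofic (G : Type*) [Group G] : Prop :=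
  ¬ IsSofic G ∧ ∃ H : ℕ → Subgroup G, StrictAnti H ∧ ∀ i, ¬ IsSofic (H i)

/-!
Soficity passes to subgroups, so any group containing a copy of a non-sofic group `G` is
non-sofic. In `ℕ → G` the subgroups `Hᵢ` of sequences that are trivial below `i` each contain
a copy of `G` (at coordinate `i`), and they decrease strictly as soon as `G` is nontrivial,
which a non-sofic group is.
-/

theorem IsSofic.of_injective {G H : Type*} [Group G] [Group H] (φ : G →* H)
    (hφ : Function.Injective φ) (hH : IsSofic H) : IsSofic G := by
  classical
  intro F ε hε
  obtain ⟨n, hn, θ, hmul, hone, hsep⟩ := hH (F.image φ) ε hε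
  refine ⟨n, hn, θ ∘ φ, ?_, ?_, ?_⟩
  · intro g h hg hh hgh
    simpa only [Function.comp_apply, map_mul] using
      hmul (φ g) (φ h) (F.mem_image_of_mem φ hg) (F.mem_image_of_mem φ hh)
        (map_mul φ g h ▸ F.mem_image_of_mem φ hgh)
  · intro h1
    simpa only [Function.comp_apply, map_one] using hone (map_one φ ▸ F.mem_image_of_mem φ h1)
  · intro x y hx hy hxy
    exact hsep (φ x) (φ y) (F.mem_image_of_mem φ hx) (F.mem_image_of_mem φ hy) (hφ.ne hxy)

theorem IsSofic.of_subsingleton (G : Type*) [Group G] [Subsingleton G] : IsSofic G := by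
  intro F ε hε
  refine ⟨1, le_rfl, fun _ => 1, ?_, ?_, ?_⟩
  · intro g h _ _ _
    simpa [permHammingDist] using hε
  · intro _
    simpa [permHammingDist] using hε
  · intro x y _ _ hxy
    exact absurd (Subsingleton.elim x y) hxy

theorem nontrivial_of_not_isSofic {G : Type*} [Group G] (hG : ¬ IsSofic G) : Nontrivial G := by
  by_contra hnt
  rw [not_nontrivial_iff_subsingleton] at hnt
  exact hG (IsSofic.of_subsingleton G)

section Tail

variable (G : Type*) [Group G]

def tailSubgroup (i : ℕ) : Subgroup (ℕ → G) :=
  Subgroup.pi {j | j < i} fun _ => ⊥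

variable {G}

theorem mem_tailSubgroup {i : ℕ} {f : ℕ → G} :
    f ∈ tailSubgroup G i ↔ ∀ j < i, f j = 1 := by
  simp only [tailSubgroup, Subgroup.mem_pi, Set.mem_ofPred_eq, Subgroup.mem_bot]

theorem mulSingle_mem_tailSubgroup (i : ℕ) (g : G) : Pi.mulSingle i g ∈ tailSubgroup G i :=
  mem_tailSubgroup.2 fun _ hj => Pi.mulSingle_eq_of_ne (M := fun _ => G) hj.ne g

theorem tailSubgroup_strictAnti [Nontrivial G] : StrictAnti (tailSubgroup G) := by
  refine strictAnti_nat_of_succ_lt fun i => SetLike.lt_iff_le_and_exists.2 ⟨?_, ?_⟩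
  · exact fun f hf =>
      mem_tailSubgroup.2 fun j hj => mem_tailSubgroup.1 hf j (hj.trans i.lt_succ_self)
  · obtain ⟨g, hg⟩ := exists_ne (1 : G)
    refine ⟨Pi.mulSingle i g, mulSingle_mem_tailSubgroup i g, fun hmem => hg ?_⟩
    simpa using mem_tailSubgroup.1 hmem i i.lt_succ_self

theorem not_isSofic_tailSubgroup (hG : ¬ IsSofic G) (i : ℕ) : ¬ IsSofic (tailSubgroup G i) :=
  fun hs => hG <| hs.of_injective
    ((MonoidHom.mulSingle (fun _ => G) i).codRestrict _ (mulSingle_mem_tailSubgroup i))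
    fun _ _ hab => Pi.mulSingle_injective i (congrArg Subtype.val hab)

end Tail

/-- If a non-sofic group exists, then an ω-non-sofic group exists. -/
theorem exists_omegaNonSofic_of_exists_nonSofic
    (h : ∃ (G : Type) (_ : Group G), ¬ IsSofic G) :
    ∃ (H : Type) (_ : Group H), IsOmegaNonSofic H := by
  obtain ⟨G, _, hG⟩ := h
  have := nontrivial_of_not_isSofic hG
  have hpi : ¬ IsSofic (ℕ → G) := fun hs => hG <| hs.of_injective
    (MonoidHom.mulSingle (fun _ => G) 0) (Pi.mulSingle_injective (M := fun _ => G) 0)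
  exact ⟨ℕ → G, inferInstance, hpi, tailSubgroup G, tailSubgroup_strictAnti,
    not_isSofic_tailSubgroup hG⟩
end
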